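/- Reduction from Max-Reward-Light (submodular case, improved constant): Let (A, f, c) be a multi-agent contract instance with monotone submodular f, let B, B' ∈ (0,1] be budgets, let γ ≥ 1, and let L be the set of light agents. Consider the scaled instance on the agent set L with the same reward f (restricted to subsets of L) and costs c'_i = (B'/B)·c_i; its payment function is p'(T) = Σ_{i∈T} c'_i/f_T(i) for T ⊆ L and its profit is g'(T) = (1 − p'(T))·f(T). Let φ' : 2^L → ℝ≥0 be a BEST objective for the scaled instance. Suppose S ⊆ L satisfies p'(S) ≤ B' and γ·φ'(S) ≥ max{φ'(T) : T ⊆ L, p'(T) ≤ B'}. Then there exists a set T ⊆ L with p(T) ≤ B (payment in the original instance), where T = S or T is a singleton, such that 6γ·f(T) ≥ Max-Reward-Light(B). -/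

import Mathlib

open scoped BigOperators ENNReal
open Finset

/-- Marginal contribution of agent `i` to set `S`: `f_S(i) = f(S) - f(S \ {i})`. -/
noncomputable def marginal {α : Type*} [DecidableEq α] (f : Finset α → ℝ) (S : Finset α)
    (i : α) : ℝ :=
  f S - f (S.erase i)

/-- Payment needed to incentivize `S`, valued in `[0,∞]`, with the conventions
`0/0 = 0` and `x/0 = ∞` for `x > 0` (these hold for ENNReal division). -/
noncomputable def payment {α : Type*} [DecidableEq α] (f : Finset α → ℝ) (c : α → ℝ)
    (S : Finset α) : ℝ≥0∞ :=
  ∑ i ∈ S, ENNReal.ofReal (c i) / ENNReal.ofReal (marginal f S i)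

/-- The principal's profit from incentivizing `S`: `g(S) = (1 - p(S)) · f(S)`. -/
noncomputable def profit {α : Type*} [DecidableEq α] (f : Finset α → ℝ) (c : α → ℝ)
    (S : Finset α) : ℝ :=
  (1 - (payment f c S).toReal) * f S

/-- `f` is monotone. -/
def IsMonotoneFn {α : Type*} (f : Finset α → ℝ) : Prop :=
  ∀ ⦃S T : Finset α⦄, S ⊆ T → f S ≤ f T

/-- `f` is subadditive. -/
def IsSubadditive {α : Type*} [DecidableEq α] (f : Finset α → ℝ) : Prop :=
  ∀ S T : Finset α, f (S ∪ T) ≤ f S + f T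

/-- `f` is submodular (decreasing marginal values). -/
def IsSubmodular {α : Type*} [DecidableEq α] (f : Finset α → ℝ) : Prop :=
  ∀ ⦃S T : Finset α⦄, S ⊆ T → ∀ i ∉ T, f (insert i T) - f T ≤ f (insert i S) - f S

/-- `f` is additive. -/
def IsAdditive {α : Type*} [DecidableEq α] (f : Finset α → ℝ) : Prop :=
  ∀ S : Finset α, f S = ∑ i ∈ S, f {i}

/-- `f` is XOS: a finite max of nonnegative additive functions. -/
def IsXOS {α : Type*} (f : Finset α → ℝ) : Prop :=
  ∃ (k : ℕ) (a : Fin (k + 1) → α → ℝ),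
    (∀ j i, 0 ≤ a j i) ∧
    ∀ S : Finset α, f S = Finset.univ.sup' Finset.univ_nonempty (fun j => ∑ i ∈ S, a j i)

/-- Agent `i` is light: it can be incentivized with payment at most `1/2`. -/
def isLight {α : Type*} [DecidableEq α] (f : Finset α → ℝ) (c : α → ℝ) (i : α) : Prop :=
  payment f c {i} ≤ ENNReal.ofReal (1 / 2)

/-- `S` is budget-feasible for budget `B`. -/
def feasible {α : Type*} [DecidableEq α] (f : Finset α → ℝ) (c : α → ℝ) (B : ℝ)
    (S : Finset α) : Prop :=
  payment f c S ≤ ENNReal.ofReal B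

/-- `S` is a budget-feasible set of light agents. -/
def feasibleLight {α : Type*} [DecidableEq α] (f : Finset α → ℝ) (c : α → ℝ) (B : ℝ)
    (S : Finset α) : Prop :=
  (∀ i ∈ S, isLight f c i) ∧ payment f c S ≤ ENNReal.ofReal B

/-- The maximum (supremum) value of objective `φ` over sets satisfying `P`. -/
noncomputable def maxVal {α : Type*} (φ : Finset α → ℝ) (P : Finset α → Prop) : ℝ :=
  sSup (φ '' {S | P S})

/-- `φ` is a BEST objective for the instance `(f, c)`: it is nonnegative, sandwiched between
profit and reward, and satisfies `φ(S) ≤ f(S \ {i}) + φ({i})` for `i ∈ S`. -/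
def IsBEST {α : Type*} [DecidableEq α] (f : Finset α → ℝ) (c : α → ℝ)
    (φ : Finset α → ℝ) : Prop :=
  (∀ S, 0 ≤ φ S) ∧
  (∀ S, φ S ≤ f S) ∧
  (∀ S, payment f c S ≤ 1 → (1 - (payment f c S).toReal) * f S ≤ φ S) ∧
  (∀ S, ∀ i ∈ S, φ S ≤ f (S.erase i) + φ {i})

/-- `φ` is a BEST objective for the instance `(f, c)` restricted to sets satisfying `P`. -/
def IsBESTOn {α : Type*} [DecidableEq α] (f : Finset α → ℝ) (c : α → ℝ)
    (P : Finset α → Prop) (φ : Finset α → ℝ) : Prop :=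
  (∀ S, P S → 0 ≤ φ S) ∧
  (∀ S, P S → φ S ≤ f S) ∧
  (∀ S, P S → payment f c S ≤ 1 → (1 - (payment f c S).toReal) * f S ≤ φ S) ∧
  (∀ S, P S → ∀ i ∈ S, φ S ≤ f (S.erase i) + φ {i})

/-!
Take `T₀` to be the best of `S` and of the light singletons affordable with budget `B`. Rescaling
the costs by `B'/B` turns budget `B` into budget `B'`, so an optimal light set `T` for budget `B`
has scaled payment at most `B'`. Splitting the payment shares of `T` greedily, `T` is one agent
together with two sets of scaled payment at most `B'/2 ≤ 1/2`. On such a set `G` the BEST objective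
retains at least half of the reward, and `G` competes with `S`, so
`f G ≤ 2 φ' G ≤ 2 γ φ' S ≤ 2 γ f T₀`. Subadditivity gives `f T ≤ (1 + 4γ) f T₀ ≤ 6γ f T₀`.
-/

open ENNReal

theorem Finset.exists_eq_insert_union_of_sum_le_two_mul {α : Type*} [DecidableEq α]
    (w : α → ℝ≥0∞) {T : Finset α} (hT : T.Nonempty) {b : ℝ≥0∞}
    (hsum : ∑ i ∈ T, w i ≤ 2 * b) :
    ∃ j ∈ T, ∃ G ⊆ T, ∃ R ⊆ T,
      ∑ i ∈ G, w i ≤ b ∧ ∑ i ∈ R, w i ≤ b ∧ T = insert j (G ∪ R) := by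
  obtain ⟨G, hGmem, hGmax⟩ := (T.powerset.filter fun G => ∑ i ∈ G, w i ≤ b).exists_max_image
    card ⟨∅, by simp⟩
  rw [mem_filter, mem_powerset] at hGmem
  obtain ⟨hGT, hGb⟩ := hGmem
  by_cases hGeq : G = T
  · subst hGeq
    obtain ⟨j, hj⟩ := hT
    refine ⟨j, hj, G.erase j, erase_subset _ _, ∅, empty_subset _,
      (sum_le_sum_of_subset (erase_subset _ _)).trans hGb, by simp, ?_⟩
    rw [union_empty, insert_erase hj]
  obtain ⟨j, hjT, hjG⟩ := not_subset.1 fun h => hGeq (hGT.antisymm h)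
  -- maximality of `#G` forces `G ∪ {j}` over budget, so the rest of `T` fits in the budget
  have hover : b < ∑ i ∈ insert j G, w i := by
    by_contra! hle
    have := hGmax (insert j G) (mem_filter.2 ⟨mem_powerset.2 (insert_subset hjT hGT), hle⟩)
    rw [card_insert_of_notMem hjG] at this
    omega
  have hjGT : insert j G ⊆ T := insert_subset hjT hGT
  refine ⟨j, hjT, G, hGT, T \ insert j G, sdiff_subset, hGb, ?_, ?_⟩
  · by_contra! hR
    have := ENNReal.add_lt_add hR hover
    rw [sum_sdiff hjGT, ← two_mul] at this
    exact this.not_ge hsum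
  · rw [← insert_union, union_sdiff_of_subset hjGT]

theorem IsMonotoneFn.nonneg {α : Type*} {f : Finset α → ℝ} (hmono : IsMonotoneFn f)
    (hf0 : f ∅ = 0) (S : Finset α) : 0 ≤ f S :=
  hf0 ▸ hmono (empty_subset S)

section Contract

variable {α : Type*} [DecidableEq α] {f : Finset α → ℝ}

theorem IsSubmodular.isSubadditive (hmono : IsMonotoneFn f) (hsub : IsSubmodular f)
    (hf0 : f ∅ = 0) : IsSubadditive f := by
  intro S T
  induction S using Finset.induction_on with
  | empty => simp [hf0]
  | @insert a S _ ih =>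
    rw [insert_union]
    by_cases haST : a ∈ S ∪ T
    · rw [insert_eq_of_mem haST]
      linarith [hmono (subset_insert a S)]
    · linarith [hsub subset_union_left a haST]

theorem IsSubmodular.marginal_le (hsub : IsSubmodular f) {G T : Finset α} (hGT : G ⊆ T)
    {i : α} (hi : i ∈ G) : marginal f T i ≤ marginal f G i := by
  have h := hsub (erase_subset_erase i hGT) i (notMem_erase i T)
  rwa [insert_erase (hGT hi), insert_erase hi] at h

theorem IsSubmodular.payment_le_sum (hsub : IsSubmodular f) (c : α → ℝ) {G T : Finset α}
    (hGT : G ⊆ T) :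
    payment f c G ≤ ∑ i ∈ G, ENNReal.ofReal (c i) / ENNReal.ofReal (marginal f T i) :=
  sum_le_sum fun _ hi => ENNReal.div_le_div_left (ofReal_le_ofReal (hsub.marginal_le hGT hi)) _

theorem IsSubmodular.payment_mono (hsub : IsSubmodular f) (c : α → ℝ) :
    Monotone (payment f c) := fun _ _ hGT =>
  (hsub.payment_le_sum c hGT).trans (sum_le_sum_of_subset hGT)

/-- Greedy splitting of the payment shares `c i / f_T(i)`; by submodularity a part `G` of `T`
pays at most its shares in `T`. -/
theorem IsSubmodular.le_add_two_mul_of_payment_le (hmono : IsMonotoneFn f)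
    (hsub : IsSubmodular f) (hf0 : f ∅ = 0) (c : α → ℝ) {T : Finset α} (hT : T.Nonempty)
    {b : ℝ≥0∞} (hpay : payment f c T ≤ 2 * b) {M M' : ℝ}
    (hM : ∀ G ⊆ T, payment f c G ≤ b → f G ≤ M) (hM' : ∀ j ∈ T, f {j} ≤ M') :
    f T ≤ M' + 2 * M := by
  obtain ⟨j, hj, G, hGT, R, hRT, hGb, hRb, hTeq⟩ :=
    exists_eq_insert_union_of_sum_le_two_mul _ hT hpay
  have hsubadd := hsub.isSubadditive hmono hf0
  calc f T = f ({j} ∪ (G ∪ R)) := by rw [← insert_eq, ← hTeq]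
    _ ≤ f {j} + (f G + f R) := by linarith [hsubadd {j} (G ∪ R), hsubadd G R]
    _ ≤ M' + 2 * M := by
      linarith [hM' j hj, hM G hGT ((hsub.payment_le_sum c hGT).trans hGb),
        hM R hRT ((hsub.payment_le_sum c hRT).trans hRb)]

theorem payment_const_mul (c : α → ℝ) {t : ℝ} (ht : 0 ≤ t) (S : Finset α) :
    payment f (fun i => t * c i) S = ENNReal.ofReal t * payment f c S := by
  simp only [payment, mul_sum, ENNReal.ofReal_mul ht, mul_div_assoc]

theorem payment_div_mul_le_iff (c : α → ℝ) {B B' : ℝ} (hB : 0 < B) (hB' : 0 < B')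
    (S : Finset α) :
    payment f (fun i => B' / B * c i) S ≤ ENNReal.ofReal B' ↔
      payment f c S ≤ ENNReal.ofReal B := by
  have hB'eq : ENNReal.ofReal B' = ENNReal.ofReal (B' / B) * ENNReal.ofReal B := by
    rw [← ENNReal.ofReal_mul (by positivity), div_mul_cancel₀ _ hB.ne']
  rw [payment_const_mul c (by positivity), hB'eq,
    ENNReal.mul_le_mul_iff_right (by positivity) ofReal_ne_top]

theorem IsBESTOn.le_two_mul {c : α → ℝ} {P : Finset α → Prop} {φ : Finset α → ℝ}
    (hφ : IsBESTOn f c P φ) {S : Finset α} (hS : P S) (hfS : 0 ≤ f S)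
    (hpay : payment f c S ≤ ENNReal.ofReal (1 / 2)) : f S ≤ 2 * φ S := by
  have hpay_real : (payment f c S).toReal ≤ 1 / 2 := toReal_le_of_le_ofReal (by norm_num) hpay
  have hprofit := hφ.2.2.1 S hS (hpay.trans (ofReal_le_one.2 (by norm_num)))
  nlinarith

end Contract

theorem le_maxVal {α : Type*} [Finite α] (φ : Finset α → ℝ) {P : Finset α → Prop}
    {S : Finset α} (hS : P S) : φ S ≤ maxVal φ P :=
  le_csSup ((Set.toFinite _).image φ).bddAbove ⟨S, hS, rfl⟩

theorem maxVal_le {α : Type*} {φ : Finset α → ℝ} {P : Finset α → Prop} {a : ℝ} (ha : 0 ≤ a)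
    (h : ∀ S, P S → φ S ≤ a) : maxVal φ P ≤ a :=
  Real.sSup_le (Set.forall_mem_image.2 h) ha

theorem exists_ge_self_and_singletons {α : Type*} [Fintype α] (f : Finset α → ℝ)
    (S : Finset α) (P : α → Prop) :
    ∃ T₀, (T₀ = S ∨ ∃ i, P i ∧ T₀ = {i}) ∧ f S ≤ f T₀ ∧ ∀ i, P i → f {i} ≤ f T₀ := by
  classical
  obtain ⟨T₀, hmem, hmax⟩ := (insert S ((univ.filter P).image singleton)).exists_max_image f
    ⟨S, mem_insert_self _ _⟩
  refine ⟨T₀, ?_, hmax S (mem_insert_self _ _),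
    fun i hi => hmax {i} (mem_insert_of_mem (mem_image_of_mem _ (by simpa using hi)))⟩
  simpa [eq_comm] using hmem

theorem reduction_from_mrl_submodular_general {α : Type*} [DecidableEq α] [Fintype α]
    (f : Finset α → ℝ) (c : α → ℝ) (φ' : Finset α → ℝ)
    (hf0 : f ∅ = 0)
    (hmono : IsMonotoneFn f) (hsubmod : IsSubmodular f)
    (B B' : ℝ) (hB0 : 0 < B) (hB'0 : 0 < B') (hB'1 : B' ≤ 1)
    (γ : ℝ) (hγ : 1 ≤ γ)
    (hφ' : IsBESTOn f (fun i => (B' / B) * c i) (fun S => ∀ i ∈ S, isLight f c i) φ')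
    (S : Finset α) (hSL : ∀ i ∈ S, isLight f c i)
    (hSfeas : payment f (fun i => (B' / B) * c i) S ≤ ENNReal.ofReal B')
    (hSapprox :
      maxVal φ' (fun T => (∀ i ∈ T, isLight f c i) ∧
        payment f (fun i => (B' / B) * c i) T ≤ ENNReal.ofReal B') ≤ γ * φ' S) :
    ∃ T : Finset α,
      (∀ i ∈ T, isLight f c i) ∧
      payment f c T ≤ ENNReal.ofReal B ∧
      (T = S ∨ T.card = 1) ∧
      maxVal f (feasibleLight f c B) ≤ 6 * γ * f T := by
  have hscale := payment_div_mul_le_iff (f := f) c hB0 hB'0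
  obtain ⟨T₀, hT₀, hST₀, hsingle⟩ :=
    exists_ge_self_and_singletons f S (feasibleLight f c B ∘ singleton)
  have hfT₀ := hmono.nonneg hf0 T₀
  have hhalf : ∀ G, (∀ i ∈ G, isLight f c i) →
      payment f (fun i => B' / B * c i) G ≤ ENNReal.ofReal (B' / 2) → f G ≤ 2 * γ * f T₀ := by
    intro G hGL hG
    have hGB' : payment f (fun i => B' / B * c i) G ≤ ENNReal.ofReal B' :=
      hG.trans (ofReal_le_ofReal (by linarith))
    calc f G ≤ 2 * φ' G := hφ'.le_two_mul hGL (hmono.nonneg hf0 G)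
          (hG.trans (ofReal_le_ofReal (by linarith)))
      _ ≤ 2 * (γ * φ' S) := by gcongr; exact (le_maxVal φ' ⟨hGL, hGB'⟩).trans hSapprox
      _ ≤ 2 * γ * f T₀ := by nlinarith [hφ'.2.1 S hSL]
  have hB'half : ENNReal.ofReal B' = 2 * ENNReal.ofReal (B' / 2) := by
    rw [← ofReal_ofNat, ← ofReal_mul zero_le_two, mul_div_cancel₀ _ two_ne_zero]
  refine ⟨T₀, ?_, ?_, ?_, maxVal_le (by positivity) fun T ⟨hTL, hTB⟩ => ?_⟩
  · rcases hT₀ with rfl | ⟨i, ⟨hiL, -⟩, rfl⟩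
    exacts [hSL, by simpa using hiL]
  · rcases hT₀ with rfl | ⟨i, ⟨-, hiB⟩, rfl⟩
    exacts [(hscale _).1 hSfeas, hiB]
  · rcases hT₀ with rfl | ⟨i, -, rfl⟩
    exacts [Or.inl rfl, Or.inr (card_singleton i)]
  rcases T.eq_empty_or_nonempty with rfl | hT
  · rw [hf0]; positivity
  calc f T ≤ f T₀ + 2 * (2 * γ * f T₀) :=
        hsubmod.le_add_two_mul_of_payment_le hmono hf0 _ hT (hB'half ▸ (hscale T).2 hTB)
          (fun G hGT => hhalf G fun i hi => hTL i (hGT hi))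
          (fun j hj => hsingle j ⟨by simpa using hTL j hj,
            (hsubmod.payment_mono c (singleton_subset_iff.2 hj)).trans hTB⟩)
    _ ≤ 6 * γ * f T₀ := by nlinarith

/-- **Reduction from Max-Reward-Light (submodular case, improved constant).**
The scaled instance lives on the set of light agents `L` (encoded by the predicate
`∀ i ∈ S, isLight f c i`), with the same reward `f` and costs scaled by `B'/B`. -/
theorem reduction_from_mrl_submodular {α : Type*} [DecidableEq α] [Fintype α]
    (f : Finset α → ℝ) (c : α → ℝ) (φ' : Finset α → ℝ)
    (hf01 : ∀ S, f S ∈ Set.Icc (0 : ℝ) 1) (hf0 : f ∅ = 0)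
    (hmono : IsMonotoneFn f) (hsubmod : IsSubmodular f) (hc : ∀ i, 0 ≤ c i)
    (B B' : ℝ) (hB0 : 0 < B) (hB1 : B ≤ 1) (hB'0 : 0 < B') (hB'1 : B' ≤ 1)
    (γ : ℝ) (hγ : 1 ≤ γ)
    (hφ' : IsBESTOn f (fun i => (B' / B) * c i) (fun S => ∀ i ∈ S, isLight f c i) φ')
    (S : Finset α) (hSL : ∀ i ∈ S, isLight f c i)
    (hSfeas : payment f (fun i => (B' / B) * c i) S ≤ ENNReal.ofReal B')
    (hSapprox :
      maxVal φ' (fun T => (∀ i ∈ T, isLight f c i) ∧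
        payment f (fun i => (B' / B) * c i) T ≤ ENNReal.ofReal B') ≤ γ * φ' S) :
    ∃ T : Finset α,
      (∀ i ∈ T, isLight f c i) ∧
      payment f c T ≤ ENNReal.ofReal B ∧
      (T = S ∨ T.card = 1) ∧
      maxVal f (feasibleLight f c B) ≤ 6 * γ * f T :=
  reduction_from_mrl_submodular_general f c φ' hf0 hmono hsubmod B B' hB0 hB'0 hB'1 γ hγ hφ' S hSL
    hSfeas hSapprox
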